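/- arXiv:2110.06743 — 4 statements merged into one kernel-verified Lean document; each statement's English description precedes it below -/
import Mathlib

section
/- Let T be a non-surjective linear isometry of a complex Banach space X. Then the spectrum of T equals the full closed unit disk 𝔻 = {λ ∈ ℂ : |λ| ≤ 1}. -/
/-!
For `‖μ‖ < 1` the isometry bound `‖(μ - T) x‖ ≥ (1 - ‖μ‖) ‖x‖` controls the norm of the
resolvent, so no point of the open unit disk can be a boundary point of the spectrum. The open
disk is connected and contains `0 ∈ σ T` (as `T` is not invertible), so it lies in the spectrum;
taking closures gives the closed disk, and the reverse inclusion is `‖T‖ ≤ 1`.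
-/

open Metric

lemma IsPreconnected.subset_of_disjoint_frontier {α : Type*} [TopologicalSpace α] {s t : Set α}
    (hs : IsPreconnected s) (hst : (s ∩ t).Nonempty) (hfr : Disjoint s (frontier t)) : s ⊆ t := by
  have hint : s ∩ closure t ⊆ interior t := fun x ⟨hxs, hxt⟩ =>
    by_contra fun hx => hfr.notMem_of_mem_left hxs ⟨hxt, hx⟩
  obtain ⟨x, hxs, hxt⟩ := hst
  refine (hs.subset_left_of_subset_union isOpen_interior isClosed_closure.isOpen_compl
    (disjoint_compl_right.mono_left interior_subset_closure)
    (fun y hy => (em (y ∈ closure t)).imp (fun h => hint ⟨hy, h⟩) id)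
    ⟨x, hxs, hint ⟨hxs, subset_closure hxt⟩⟩).trans interior_subset

section Isometry

variable {𝕜 X : Type*} [NontriviallyNormedField 𝕜] [NormedAddCommGroup X] [NormedSpace 𝕜 X]
  {T : X →L[𝕜] X}

lemma opNorm_le_one_of_norm_apply_eq (hT : ∀ x, ‖T x‖ = ‖x‖) : ‖T‖ ≤ 1 :=
  T.opNorm_le_bound zero_le_one fun x => by rw [hT, one_mul]

lemma mul_norm_le_norm_algebraMap_sub_apply (hT : ∀ x, ‖T x‖ = ‖x‖) (μ : 𝕜) (x : X) :
    (1 - ‖μ‖) * ‖x‖ ≤ ‖(algebraMap 𝕜 (X →L[𝕜] X) μ - T) x‖ :=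
  calc (1 - ‖μ‖) * ‖x‖ = ‖T x‖ - ‖μ • x‖ := by rw [hT, norm_smul]; ring
    _ ≤ ‖T x - μ • x‖ := norm_sub_norm_le _ _
    _ = ‖(algebraMap 𝕜 (X →L[𝕜] X) μ - T) x‖ := by
      rw [norm_sub_rev, Algebra.algebraMap_eq_smul_one]; rfl

lemma norm_inv_le_of_val_eq_algebraMap_sub (hT : ∀ x, ‖T x‖ = ‖x‖) {μ : 𝕜} (hμ : ‖μ‖ < 1)
    (u : (X →L[𝕜] X)ˣ) (hu : (u : X →L[𝕜] X) = algebraMap 𝕜 _ μ - T) :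
    ‖(↑u⁻¹ : X →L[𝕜] X)‖ ≤ (1 - ‖μ‖)⁻¹ := by
  have hpos : 0 < 1 - ‖μ‖ := sub_pos.mpr hμ
  refine ContinuousLinearMap.opNorm_le_bound _ (inv_nonneg.mpr hpos.le) fun y => ?_
  have hy := mul_norm_le_norm_algebraMap_sub_apply hT μ ((↑u⁻¹ : X →L[𝕜] X) y)
  rw [← hu, ← mul_apply_eq_comp, u.mul_inv, one_apply_eq_self] at hy
  rwa [inv_mul_eq_div, le_div_iff₀ hpos, mul_comm]

variable [CompleteSpace X]

lemma spectrum_subset_closedBall_one_of_norm_apply_eq (hT : ∀ x, ‖T x‖ = ‖x‖) :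
    spectrum 𝕜 T ⊆ closedBall 0 1 :=
  (spectrum.subset_closedBall_norm_mul T).trans <| closedBall_subset_closedBall <|
    mul_le_one₀ (opNorm_le_one_of_norm_apply_eq hT) (norm_nonneg _) ContinuousLinearMap.norm_id_le

lemma notMem_spectrum_of_norm_sub_lt (hT : ∀ x, ‖T x‖ = ‖x‖) {μ ν : 𝕜} (hμ : ‖μ‖ < 1)
    (hμT : μ ∉ spectrum 𝕜 T) (hν : ‖ν - μ‖ < 1 - ‖μ‖) : ν ∉ spectrum 𝕜 T := by
  nontriviality X
  obtain ⟨u, hu⟩ := spectrum.notMem_iff.mp hμT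
  have hdist : ‖(algebraMap 𝕜 (X →L[𝕜] X) ν - T) - u‖ < ‖(↑u⁻¹ : X →L[𝕜] X)‖⁻¹ :=
    calc ‖(algebraMap 𝕜 (X →L[𝕜] X) ν - T) - u‖ = ‖ν - μ‖ := by
          rw [hu, sub_sub_sub_cancel_right, ← map_sub, norm_algebraMap']
      _ < 1 - ‖μ‖ := hν
      _ ≤ ‖(↑u⁻¹ : X →L[𝕜] X)‖⁻¹ :=
          (le_inv_comm₀ (sub_pos.mpr hμ) (Units.norm_pos u⁻¹)).mpr
            (norm_inv_le_of_val_eq_algebraMap_sub hT hμ u hu)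
  exact spectrum.notMem_iff.mpr (u.ofNearby _ hdist).isUnit

lemma one_le_norm_of_mem_frontier_spectrum (hT : ∀ x, ‖T x‖ = ‖x‖) {ν : 𝕜}
    (hν : ν ∈ frontier (spectrum 𝕜 T)) : 1 ≤ ‖ν‖ := by
  by_contra! hν1
  have hνT : ν ∈ spectrum 𝕜 T := (spectrum.isClosed T).frontier_subset hν
  rw [← frontier_compl] at hν
  obtain ⟨μ, hμT, hνμ⟩ :=
    mem_closure_iff.mp (frontier_subset_closure hν) ((1 - ‖ν‖) / 2) (by linarith)
  rw [dist_eq_norm] at hνμ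
  have hμ : ‖μ‖ ≤ ‖ν‖ + ‖ν - μ‖ := norm_le_norm_add_norm_sub ν μ
  exact notMem_spectrum_of_norm_sub_lt hT (by linarith) hμT (by linarith) hνT

lemma zero_mem_spectrum_of_not_surjective (hT : ¬ Function.Surjective T) : 0 ∈ spectrum 𝕜 T :=
  (spectrum.zero_mem_iff 𝕜).mpr fun hunit =>
    hT (ContinuousLinearMap.isUnit_iff_bijective.mp hunit).2

end Isometry

lemma ball_one_subset_spectrum {𝕜 X : Type*} [RCLike 𝕜] [NormedAddCommGroup X]
    [NormedSpace 𝕜 X] [CompleteSpace X] {T : X →L[𝕜] X} (hT : ∀ x, ‖T x‖ = ‖x‖)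
    (h0 : (0 : 𝕜) ∈ spectrum 𝕜 T) : ball 0 1 ⊆ spectrum 𝕜 T := by
  refine (convex_ball (0 : 𝕜) 1).isPreconnected.subset_of_disjoint_frontier
    ⟨0, mem_ball_self one_pos, h0⟩ (Set.disjoint_left.mpr fun ν hν hνT => ?_)
  exact (one_le_norm_of_mem_frontier_spectrum hT hνT).not_gt (mem_ball_zero_iff.mp hν)

theorem stmt_5_general {X : Type*} [NormedAddCommGroup X] [NormedSpace ℂ X] [CompleteSpace X]
    (T : X →L[ℂ] X)
    (hiso : ∀ x : X, ‖T x‖ = ‖x‖) (hsurj : ¬ Function.Surjective T) :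
    spectrum ℂ T = Metric.closedBall (0 : ℂ) 1 := by
  refine (spectrum_subset_closedBall_one_of_norm_apply_eq hiso).antisymm ?_
  calc closedBall (0 : ℂ) 1 = closure (ball 0 1) := (closure_ball 0 one_ne_zero).symm
    _ ⊆ closure (spectrum ℂ T) :=
        closure_mono (ball_one_subset_spectrum hiso (zero_mem_spectrum_of_not_surjective hsurj))
    _ = spectrum ℂ T := (spectrum.isClosed T).closure_eq

/-- The spectrum of a non-surjective linear isometry of a complex Banach
space is the full closed unit disk. -/
theorem stmt_5 {X : Type*} [NormedAddCommGroup X] [NormedSpace ℂ X] [CompleteSpace X]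
    [Nontrivial X] (T : X →L[ℂ] X)
    (hiso : ∀ x : X, ‖T x‖ = ‖x‖) (hsurj : ¬ Function.Surjective T) :
    spectrum ℂ T = Metric.closedBall (0 : ℂ) 1 :=
  stmt_5_general T hiso hsurj
end

section
/- Let A be a nonzero simple C*-algebra and Φ a nonzero *-endomorphism of A. Then Φ is injective, and σ(Φ) = 𝔻 if and only if Φ is not surjective, while σ(Φ) ⊂ 𝕋 if and only if Φ is surjective. -/
/-!
The kernel of `Φ` is a closed two-sided ideal, so simplicity makes `Φ` injective, and an injective
*-homomorphism of C*-algebras is isometric. For an isometry `T` and `‖μ‖ < 1`, the operator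
`μ - T` is bounded below by `1 - ‖μ‖`; a unit bounded below by `c` stays a unit under
perturbations of norm `< c`, so invertibility of `μ - T` is locally constant on the open unit
disc and hence, the disc being connected, equivalent to invertibility of `T`. Thus the open disc
lies in the spectrum when `T` is not surjective and misses it when `T` is; since `‖T‖ ≤ 1` and the
spectrum is closed, this gives the closed disc in the first case and a subset of the circle in
the second.
-/

open Metric

theorem TwoSidedIdeal.injective_of_forall_isClosed {R S F : Type*} [NonUnitalNonAssocRing R]
    [TopologicalSpace R] [NonUnitalNonAssocSemiring S] [TopologicalSpace S] [T1Space S]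
    [FunLike F R S] [NonUnitalRingHomClass F R S]
    (hsimple : ∀ I : TwoSidedIdeal R, IsClosed (I : Set R) → I = ⊥ ∨ I = ⊤)
    (f : F) (hf : Continuous f) (hne : ∃ a, f a ≠ 0) : Function.Injective f := by
  have hker : (ker f : Set R) = f ⁻¹' {0} := Set.ext fun _ => mem_ker f
  rcases hsimple (ker f) (hker ▸ isClosed_singleton.preimage hf) with hbot | htop
  · exact (ker_eq_bot f).1 hbot
  · obtain ⟨a, ha⟩ := hne
    exact absurd ((mem_ker f).1 (htop ▸ mem_top R)) ha

namespace ContinuousLinearMap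

variable {𝕜 E : Type*} [RCLike 𝕜] [NormedAddCommGroup E] [NormedSpace 𝕜 E] {T : E →L[𝕜] E}

theorem one_sub_norm_mul_le_norm_algebraMap_sub_apply (hT : ∀ x, ‖T x‖ = ‖x‖) (μ : 𝕜) (x : E) :
    (1 - ‖μ‖) * ‖x‖ ≤ ‖(algebraMap 𝕜 (E →L[𝕜] E) μ - T) x‖ :=
  calc (1 - ‖μ‖) * ‖x‖ = ‖T x‖ - ‖μ • x‖ := by rw [hT, norm_smul]; ring
    _ ≤ ‖T x - μ • x‖ := norm_sub_norm_le _ _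
    _ = ‖(algebraMap 𝕜 (E →L[𝕜] E) μ - T) x‖ := by
      rw [norm_sub_rev, sub_apply, algebraMap_apply]

variable [CompleteSpace E] [Nontrivial E]

theorem isUnit_of_norm_sub_lt {S S' : E →L[𝕜] E} {c : ℝ} (hS : IsUnit S)
    (hS_below : ∀ x, c * ‖x‖ ≤ ‖S x‖) (h : ‖S' - S‖ < c) : IsUnit S' := by
  obtain ⟨u, rfl⟩ := hS
  have hc : 0 < c := (norm_nonneg _).trans_lt h
  have hinv : ‖(↑u⁻¹ : E →L[𝕜] E)‖ ≤ c⁻¹ := by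
    refine opNorm_le_bound _ (inv_nonneg.2 hc.le) fun y => ?_
    rw [inv_mul_eq_div, le_div_iff₀ hc, mul_comm]
    have hy : (u : E →L[𝕜] E) ((↑u⁻¹ : E →L[𝕜] E) y) = y :=
      congrArg (fun f : E →L[𝕜] E => f y) u.mul_inv
    simpa only [hy] using hS_below ((↑u⁻¹ : E →L[𝕜] E) y)
  have hc_le : c ≤ ‖(↑u⁻¹ : E →L[𝕜] E)‖⁻¹ := (le_inv_comm₀ hc (Units.norm_pos u⁻¹)).2 hinv
  exact (u.ofNearby S' (h.trans_le hc_le)).isUnit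

theorem isUnit_algebraMap_sub_of_norm_sub_lt (hT : ∀ x, ‖T x‖ = ‖x‖) {μ ν : 𝕜}
    (hμν : ‖ν - μ‖ < 1 - ‖μ‖) (hμ : IsUnit (algebraMap 𝕜 (E →L[𝕜] E) μ - T)) :
    IsUnit (algebraMap 𝕜 (E →L[𝕜] E) ν - T) := by
  refine isUnit_of_norm_sub_lt hμ (one_sub_norm_mul_le_norm_algebraMap_sub_apply hT μ) ?_
  rwa [sub_sub_sub_cancel_right, ← map_sub, norm_algebraMap']

theorem isUnit_algebraMap_sub_iff_of_norm_lt_one (hT : ∀ x, ‖T x‖ = ‖x‖) {μ : 𝕜}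
    (hμ : ‖μ‖ < 1) : IsUnit (algebraMap 𝕜 (E →L[𝕜] E) μ - T) ↔ IsUnit T := by
  let P : 𝕜 → 𝕜 → Prop := fun μ ν =>
    IsUnit (algebraMap 𝕜 (E →L[𝕜] E) μ - T) → IsUnit (algebraMap 𝕜 (E →L[𝕜] E) ν - T)
  have hlocal : ∀ μ ∈ ball (0 : 𝕜) 1, ∀ᶠ ν in nhdsWithin μ (ball 0 1), P μ ν ∧ P ν μ := by
    intro μ hμ
    rw [mem_ball_zero_iff] at hμ
    filter_upwards [mem_nhdsWithin_of_mem_nhds (ball_mem_nhds μ (by linarith : 0 < (1 - ‖μ‖) / 2))]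
      with ν hν
    rw [mem_ball, dist_eq_norm] at hν
    have : ‖ν‖ - ‖μ‖ ≤ ‖ν - μ‖ := norm_sub_norm_le ν μ
    exact ⟨isUnit_algebraMap_sub_of_norm_sub_lt hT (by linarith),
      isUnit_algebraMap_sub_of_norm_sub_lt hT (by rw [norm_sub_rev]; linarith)⟩
  have hP : ∀ μ ∈ ball (0 : 𝕜) 1, ∀ ν ∈ ball (0 : 𝕜) 1, P μ ν := fun μ hμ ν hν =>
    (convex_ball (0 : 𝕜) 1).isPreconnected.induction₂' P hlocal
      (fun _ _ _ _ _ _ hab hbc => hbc ∘ hab) hμ hν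
  have hμ' : μ ∈ ball (0 : 𝕜) 1 := mem_ball_zero_iff.2 hμ
  have h0 : (0 : 𝕜) ∈ ball (0 : 𝕜) 1 := mem_ball_self one_pos
  simpa [P] using (⟨hP μ hμ' 0 h0, hP 0 h0 μ hμ'⟩ :
    IsUnit (algebraMap 𝕜 (E →L[𝕜] E) μ - T) ↔ IsUnit (algebraMap 𝕜 (E →L[𝕜] E) 0 - T))

theorem spectrum_subset_closedBall_of_isometry (hT : ∀ x, ‖T x‖ = ‖x‖) :
    spectrum 𝕜 T ⊆ closedBall 0 1 :=
  (spectrum.subset_closedBall_norm T).trans <| closedBall_subset_closedBall <|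
    opNorm_le_bound _ zero_le_one fun x => by rw [hT, one_mul]

theorem spectrum_eq_closedBall_iff_of_isometry (hT : ∀ x, ‖T x‖ = ‖x‖) :
    spectrum 𝕜 T = closedBall 0 1 ↔ ¬IsUnit T := by
  refine ⟨fun h => spectrum.zero_mem_iff 𝕜 |>.1 (h ▸ mem_closedBall_self zero_le_one), fun h => ?_⟩
  refine (spectrum_subset_closedBall_of_isometry hT).antisymm ?_
  have hball : ball (0 : 𝕜) 1 ⊆ spectrum 𝕜 T := fun μ hμ => by
    rw [spectrum.mem_iff, isUnit_algebraMap_sub_iff_of_norm_lt_one hT (mem_ball_zero_iff.1 hμ)]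
    exact h
  rw [← closure_ball (0 : 𝕜) one_ne_zero]
  exact closure_minimal hball (spectrum.isClosed T)

theorem spectrum_subset_sphere_iff_of_isometry (hT : ∀ x, ‖T x‖ = ‖x‖) :
    spectrum 𝕜 T ⊆ sphere 0 1 ↔ IsUnit T := by
  refine ⟨fun h => spectrum.zero_notMem_iff 𝕜 |>.1 fun h0 => by simpa using h h0, fun h μ hμ => ?_⟩
  have hle : ‖μ‖ ≤ 1 := mem_closedBall_zero_iff.1 (spectrum_subset_closedBall_of_isometry hT hμ)
  have hnlt : ¬‖μ‖ < 1 := fun hlt =>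
    spectrum.mem_iff.1 hμ ((isUnit_algebraMap_sub_iff_of_norm_lt_one hT hlt).2 h)
  exact mem_sphere_zero_iff_norm.2 (le_antisymm hle (not_lt.1 hnlt))

end ContinuousLinearMap

open ContinuousLinearMap in
/-- A nonzero *-endomorphism of a nonzero simple C*-algebra is injective,
its spectrum is the closed unit disk iff it is not surjective, and its spectrum is
contained in the unit circle iff it is surjective. -/
theorem stmt_7 {A : Type*} [NormedRing A] [StarRing A] [CStarRing A] [NormedAlgebra ℂ A]
    [CompleteSpace A] [StarModule ℂ A] [Nontrivial A]
    (hsimple : ∀ I : TwoSidedIdeal A, IsClosed (I : Set A) → I = ⊥ ∨ I = ⊤)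
    (Φ : A →L[ℂ] A)
    (hmul : ∀ a b : A, Φ (a * b) = Φ a * Φ b)
    (hstar : ∀ a : A, Φ (star a) = star (Φ a))
    (hne : Φ ≠ 0) :
    Function.Injective Φ ∧
    (spectrum ℂ Φ = Metric.closedBall (0 : ℂ) 1 ↔ ¬ Function.Surjective Φ) ∧
    (spectrum ℂ Φ ⊆ Metric.sphere (0 : ℂ) 1 ↔ Function.Surjective Φ) := by
  let _ : CStarAlgebra A :=
    { ‹NormedRing A›, ‹StarRing A›, ‹CStarRing A›, ‹NormedAlgebra ℂ A›, ‹StarModule ℂ A›,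
      ‹CompleteSpace A› with }
  let φ : A →⋆ₙₐ[ℂ] A :=
    { toFun := Φ, map_smul' := Φ.map_smul, map_add' := Φ.map_add, map_zero' := Φ.map_zero,
      map_mul' := hmul, map_star' := hstar }
  have hinj : Function.Injective Φ :=
    TwoSidedIdeal.injective_of_forall_isClosed hsimple φ Φ.continuous (DFunLike.ne_iff.1 hne)
  have hiso : ∀ a, ‖Φ a‖ = ‖a‖ := NonUnitalStarAlgHom.norm_map φ hinj
  have hunit : IsUnit Φ ↔ Function.Surjective Φ := isUnit_iff_bijective.trans (and_iff_right hinj)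
  exact ⟨hinj, (spectrum_eq_closedBall_iff_of_isometry hiso).trans (not_congr hunit),
    (spectrum_subset_sphere_iff_of_isometry hiso).trans hunit⟩
end

section
/- Let A be a finite-dimensional C*-algebra and Φ : A → A a *-endomorphism (not necessarily unital). Then the spectrum of Φ, as a linear operator on A, is contained in {0} ∪ 𝕋. -/
/-!
If `Φ b = λ • b` with `b ≠ 0`, then `c = b⋆ * b` is an eigenvector of `Φ` for `|λ|²`, and so is
every power `c ^ (n + 1)`, with eigenvalue `|λ|^(2(n+1))`; these powers are nonzero because `c` is
self-adjoint and the C⋆-identity gives `‖c ^ 2 ^ k‖ = ‖c‖ ^ 2 ^ k`. Unless `λ = 0` or `|λ| = 1`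
the eigenvalues are pairwise distinct, giving infinitely many linearly independent eigenvectors in
a finite-dimensional space.
-/

open Function ComplexConjugate

theorem IsSelfAdjoint.not_isNilpotent {E : Type*} [NormedRing E] [StarRing E]
    [CStarRing E] {x : E} (hx : IsSelfAdjoint x) (hx₀ : x ≠ 0) : ¬ IsNilpotent x := by
  rintro ⟨n, hn⟩
  have h_two_pow : x ^ 2 ^ n = 0 := pow_eq_zero_of_le n.lt_two_pow_self.le hn
  have := hx.nnnorm_pow_two_pow n
  rw [h_two_pow, nnnorm_zero, eq_comm, pow_eq_zero_iff (by positivity), nnnorm_eq_zero] at this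
  exact hx₀ this

theorem map_pow_succ_of_eq_smul {R A : Type*} [CommMonoid R] [Monoid A] [MulAction R A]
    [IsScalarTower R A A] [SMulCommClass R A A] {f : A → A}
    (hmul : ∀ a b : A, f (a * b) = f a * f b) {c : A} {μ : R} (hc : f c = μ • c) (n : ℕ) :
    f (c ^ (n + 1)) = μ ^ (n + 1) • c ^ (n + 1) := by
  induction n with
  | zero => simpa using hc
  | succ n ih => rw [pow_succ c, hmul, ih, hc, smul_mul_smul_comm, ← pow_succ, ← pow_succ]

theorem Module.End.not_injective_pow_succ_of_eigenvector {K A : Type*} [Field K] [Ring A]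
    [Algebra K A] [FiniteDimensional K A] (f : Module.End K A)
    (hmul : ∀ a b : A, f (a * b) = f a * f b) {c : A} {μ : K} (hc : f c = μ • c)
    (hnil : ¬ IsNilpotent c) : ¬ Function.Injective fun n : ℕ => μ ^ (n + 1) := fun hinj =>
  Module.Finite.not_linearIndependent_of_infinite _ <|
    f.eigenvectors_linearIndependent' _ hinj (fun n => c ^ (n + 1)) fun n =>
      ⟨mem_eigenspace_iff.2 (map_pow_succ_of_eq_smul hmul hc n), fun h => hnil ⟨n + 1, h⟩⟩

theorem pow_succ_injective_of_norm_ne_one {𝕜 : Type*} [NormedDivisionRing 𝕜] {μ : 𝕜}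
    (hμ₀ : μ ≠ 0) (hμ₁ : ‖μ‖ ≠ 1) : Injective fun n : ℕ => μ ^ (n + 1) := fun m n h =>
  Nat.succ_injective <| pow_right_injective₀ (norm_pos_iff.2 hμ₀) hμ₁ <| by
    simpa only [norm_pow] using congrArg norm h

/-- The spectrum of a (not necessarily unital) *-endomorphism of a
finite-dimensional C*-algebra is contained in `{0} ∪ 𝕋`. -/
theorem stmt_8 {A : Type*} [NormedRing A] [StarRing A] [CStarRing A] [NormedAlgebra ℂ A]
    [StarModule ℂ A] [FiniteDimensional ℂ A]
    (Φ : A →L[ℂ] A)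
    (hmul : ∀ a b : A, Φ (a * b) = Φ a * Φ b)
    (hstar : ∀ a : A, Φ (star a) = star (Φ a)) :
    spectrum ℂ Φ ⊆ {(0 : ℂ)} ∪ Metric.sphere (0 : ℂ) 1 := by
  intro lam hlam
  obtain ⟨b, hb⟩ := (Module.End.HasEigenvalue.of_mem_spectrum
    (ContinuousLinearMap.spectrum_eq (f := Φ) ▸ hlam)).exists_hasEigenvector
  have hΦb : Φ b = lam • b := hb.apply_eq_smul
  have hΦc : Φ (star b * b) = (conj lam * lam) • (star b * b) := by
    rw [hmul, hstar, hΦb, star_smul, smul_mul_smul_comm]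
    rfl
  have hnil : ¬ IsNilpotent (star b * b) :=
    (IsSelfAdjoint.star_mul_self b).not_isNilpotent
      ((CStarRing.star_mul_self_ne_zero_iff b).2 hb.2)
  have hpow :=
    Module.End.not_injective_pow_succ_of_eigenvector (Φ : Module.End ℂ A) hmul hΦc hnil
  by_contra hlam'
  simp only [Set.mem_union, Set.mem_singleton_iff, mem_sphere_zero_iff_norm, not_or] at hlam'
  obtain ⟨hlam₀, hlam₁⟩ := hlam'
  refine hpow (pow_succ_injective_of_norm_ne_one (by simpa using hlam₀) ?_)
  rw [norm_mul, RCLike.norm_conj]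
  exact fun h => hlam₁ (by nlinarith [norm_nonneg lam])
end

section
/- Let A be a finite-dimensional C*-algebra and Φ : A → A a completely positive unital map. Then there is a strictly increasing sequence (n_j) of natural numbers such that Φ^{n_j} converges in norm to the spectral projection P onto the direct sum of the eigenspaces of Φ for peripheral eigenvalues. Consequently P is a unital completely positive projection. -/
/-!
All powers of `Φ` are unital and completely positive, hence positive, so `‖Φ ^ n‖ ≤ 4`.
For a power-bounded operator on a finite-dimensional complex space there are no eigenvalues
outside the unit disc, the powers kill the generalized eigenspaces of eigenvalues inside it,
and peripheral generalized eigenvectors are eigenvectors. Along a sequence `n j` on which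
`λ ^ n j → 1` for the finitely many peripheral eigenvalues `λ` simultaneously (compactness of
the torus), `Φ ^ n j` therefore converges to the projection onto the peripheral eigenspaces along
the remaining generalized eigenspaces. Unitality and complete positivity survive the limit
because the positive matrices over a C⋆-algebra form a closed cone.
-/

open Filter

/-- A bounded linear map on a C*-algebra is completely positive if its entrywise
application maps positive matrices (those of the form `Nᴴ * N`) to positive matrices,
for every matrix size. -/
def IsCompletelyPositive {A : Type*} [NormedRing A] [StarRing A] [NormedAlgebra ℂ A]
    (Φ : A →L[ℂ] A) : Prop :=
  ∀ (n : ℕ) (M : Matrix (Fin n) (Fin n) A),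
    (∃ N : Matrix (Fin n) (Fin n) A, M = N.conjTranspose * N) →
    ∃ N' : Matrix (Fin n) (Fin n) A, M.map (fun a => Φ a) = N'.conjTranspose * N'

open Topology

theorem frequently_forall_norm_pow_sub_one_lt {ι : Type*} [Fintype ι] (z : ι → ℂ)
    (hz : ∀ i, ‖z i‖ = 1) {ε : ℝ} (hε : 0 < ε) :
    ∃ᶠ n in atTop, ∀ i, ‖z i ^ n - 1‖ < ε := by
  set u : ℕ → ι → ℂ := fun n i => z i ^ n
  have hu : ∀ n, u n ∈ Metric.closedBall 0 1 := fun n =>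
    mem_closedBall_zero_iff.mpr <| (pi_norm_le_iff_of_nonneg zero_le_one).mpr fun i => by
      simp [u, hz]
  obtain ⟨_, -, φ, hφ, hconv⟩ := tendsto_subseq_of_bounded Metric.isBounded_closedBall hu
  obtain ⟨K, hK⟩ := Metric.cauchySeq_iff'.mp hconv.cauchySeq ε hε
  -- `z ^ (b - a)` is near `1` when `z ^ a` and `z ^ b` are near each other and `‖z‖ = 1`.
  refine frequently_atTop.mpr fun N => ?_
  have hK₁ : K ≤ φ K := hφ.le_apply
  have hK₂ : φ K + N ≤ φ (φ K + N) := hφ.le_apply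
  refine ⟨φ (φ K + N) - φ K, by omega, fun i => ?_⟩
  calc ‖z i ^ (φ (φ K + N) - φ K) - 1‖
      = ‖z i ^ φ K * (z i ^ (φ (φ K + N) - φ K) - 1)‖ := by simp [hz]
    _ = ‖u (φ (φ K + N)) i - u (φ K) i‖ := by
        rw [mul_sub, mul_one, ← pow_add, Nat.add_sub_cancel' (by omega)]
    _ ≤ dist (u (φ (φ K + N))) (u (φ K)) := by rw [← dist_eq_norm]; exact dist_le_pi_dist _ _ i
    _ < ε := hK _ (by omega)

theorem exists_strictMono_tendsto_pow_nhds_one {ι : Type*} [Finite ι] (z : ι → ℂ)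
    (hz : ∀ i, ‖z i‖ = 1) :
    ∃ nj : ℕ → ℕ, StrictMono nj ∧ ∀ i, Tendsto (fun j => z i ^ nj j) atTop (𝓝 1) := by
  have := Fintype.ofFinite ι
  obtain ⟨nj, hmono, hnj⟩ := extraction_forall_of_frequently fun j : ℕ =>
    frequently_forall_norm_pow_sub_one_lt z hz (Nat.one_div_pos_of_nat (n := j))
  refine ⟨nj, hmono, fun i => tendsto_iff_norm_sub_tendsto_zero.mpr ?_⟩
  exact squeeze_zero (fun _ => norm_nonneg _) (fun j => (hnj j i).le)
    tendsto_one_div_add_atTop_nhds_zero_nat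

theorem ContinuousLinearMap.tendsto_of_forall_tendsto_apply {𝕜 E F α : Type*}
    [NontriviallyNormedField 𝕜] [CompleteSpace 𝕜] [NormedAddCommGroup E] [NormedSpace 𝕜 E]
    [FiniteDimensional 𝕜 E] [NormedAddCommGroup F] [NormedSpace 𝕜 F] {l : Filter α}
    {T : α → E →L[𝕜] F} {S : E →L[𝕜] F} (h : ∀ x, Tendsto (fun a => T a x) l (𝓝 (S x))) :
    Tendsto T l (𝓝 S) := by
  set b := Module.finBasis 𝕜 E
  obtain ⟨C, -, hC⟩ := b.exists_opNorm_le (F := F)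
  rw [tendsto_iff_norm_sub_tendsto_zero]
  refine squeeze_zero (fun _ => norm_nonneg _) (fun a => hC (by positivity) fun i =>
    Finset.single_le_sum (f := fun i => ‖(T a - S) (b i)‖) (fun _ _ => norm_nonneg _)
      (Finset.mem_univ i)) ?_
  simpa using (tendsto_finsetSum Finset.univ fun i _ =>
    tendsto_iff_norm_sub_tendsto_zero.mp (h (b i))).const_mul C

namespace Module.End

variable {V : Type*} [NormedAddCommGroup V] [NormedSpace ℂ V] {f : Module.End ℂ V} {μ : ℂ}

lemma tendsto_pow_apply_of_mem_maxGenEigenspace (hμ : ‖μ‖ < 1) {x : V}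
    (hx : x ∈ f.maxGenEigenspace μ) :
    Tendsto (fun n => (f ^ n) x) atTop (𝓝 0) := by
  obtain ⟨k, hk⟩ := (mem_maxGenEigenspace f μ x).mp hx
  set N := f - μ • 1
  set term : ℕ → ℕ → V := fun m n => ((n.choose m : ℂ) * μ ^ (n - m)) • (N ^ m) x
  have hbinom : ∀ n, k ≤ n → (f ^ n) x = ∑ m ∈ Finset.range k, term m n := by
    intro n hn
    have hN : f = N + μ • 1 := by simp [N]
    calc (f ^ n) x = ∑ m ∈ Finset.range (n + 1), term m n := by
          rw [hN, ((Commute.one_right N).smul_right μ).add_pow, LinearMap.sum_apply]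
          refine Finset.sum_congr rfl fun m _ => ?_
          simp only [term, mul_apply, smul_pow, one_pow, natCast_apply, LinearMap.smul_apply,
            one_apply, map_nsmul, map_smul]
          module
      _ = _ := by
          refine (Finset.sum_subset (Finset.range_subset_range.mpr (by omega))
            fun m _ hm => ?_).symm
          obtain ⟨t, rfl⟩ := Nat.exists_eq_add_of_le' (not_lt.mp (Finset.mem_range.not.mp hm))
          simp only [term, pow_add, mul_apply, hk, map_zero, smul_zero]
  have hterm : ∀ m, Tendsto (term m) atTop (𝓝 0) := fun m =>
    (tendsto_add_atTop_iff_nat m).mp <| by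
      simpa [term] using (summable_choose_mul_geometric_of_norm_lt_one m hμ).tendsto_atTop_zero
        |>.smul_const ((N ^ m) x)
  simpa using (tendsto_finsetSum (Finset.range k) fun m _ => hterm m).congr'
    ((eventually_ge_atTop k).mono fun n hn => (hbinom n hn).symm)

def peripheralEigenspace (f : Module.End ℂ V) : Submodule ℂ V :=
  ⨆ z ∈ {z : ℂ | ‖z‖ = 1}, f.eigenspace z

section PowerBounded

variable {C : ℝ} (hf : ∀ n x, ‖(f ^ n) x‖ ≤ C * ‖x‖)
include hf

lemma norm_le_one_of_hasEigenvalue (hμ : f.HasEigenvalue μ) : ‖μ‖ ≤ 1 := by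
  obtain ⟨x, hx⟩ := hμ.exists_hasEigenvector
  have hpow : ∀ n, ‖μ‖ ^ n ≤ C := fun n => by
    have := hf n x
    rw [hx.pow_apply, norm_smul, norm_pow] at this
    exact le_of_mul_le_mul_right this (norm_pos_iff.mpr hx.2)
  by_contra! h
  obtain ⟨n, hn⟩ := pow_unbounded_of_one_lt C h
  exact (hpow n).not_gt hn

lemma maxGenEigenspace_eq_bot_of_one_lt_norm (hμ : 1 < ‖μ‖) : f.maxGenEigenspace μ = ⊥ := by
  by_contra h
  exact (norm_le_one_of_hasEigenvalue hf (HasUnifEigenvalue.lt zero_lt_one h)).not_gt hμ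

/-- A Jordan chain of length two for a peripheral eigenvalue would make `‖(f ^ n) x‖` grow
linearly in `n`. -/
lemma eq_zero_of_apply_eq_smul_add (hμ : ‖μ‖ = 1) {x y : V} (hy : f y = μ • y)
    (hx : f x = μ • x + y) : y = 0 := by
  have hpow : ∀ n : ℕ, (f ^ (n + 1)) x = μ ^ (n + 1) • x + ((n + 1) * μ ^ n) • y := by
    intro n
    induction n with
    | zero => simpa using hx
    | succ n ih =>
      rw [pow_succ', mul_apply, ih, map_add, map_smul, map_smul, hx, hy]
      push_cast
      module
  have hbound : ∀ n : ℕ, ‖y‖ ≤ (C + 1) * ‖x‖ / (n + 1) := fun n => by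
    rw [le_div_iff₀ (by positivity)]
    calc ‖y‖ * (n + 1) = ‖(f ^ (n + 1)) x - μ ^ (n + 1) • x‖ := by
          rw [hpow, add_sub_cancel_left, norm_smul, norm_mul, norm_pow, hμ, one_pow, mul_one,
            mul_comm]
          norm_cast
      _ ≤ C * ‖x‖ + ‖x‖ := by
          refine (norm_sub_le _ _).trans (add_le_add (hf _ x) ?_)
          rw [norm_smul, norm_pow, hμ, one_pow, one_mul]
      _ = (C + 1) * ‖x‖ := by ring
  exact norm_le_zero_iff.mp <| ge_of_tendsto'
    (tendsto_const_div_atTop_nhds_zero_nat _ |>.comp (tendsto_add_atTop_nat 1))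
    (by simpa using hbound)

lemma maxGenEigenspace_eq_eigenspace_of_norm_eq_one (hμ : ‖μ‖ = 1) :
    f.maxGenEigenspace μ = f.eigenspace μ := by
  set N := f - μ • 1
  have hker : LinearMap.ker (N ^ 1) = LinearMap.ker (N ^ 2) := by
    refine le_antisymm (fun x hx => ?_) fun x hx => ?_
    · rw [LinearMap.mem_ker] at hx ⊢
      rw [pow_succ', mul_apply, hx, map_zero]
    · rw [LinearMap.mem_ker, pow_one]
      refine eq_zero_of_apply_eq_smul_add hf hμ (x := x) ?_ ?_
      · have : N (N x) = 0 := by simpa [sq] using hx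
        simpa [N, sub_eq_zero] using this
      · simp [N]
  ext x
  rw [mem_maxGenEigenspace, mem_eigenspace_iff]
  constructor
  · rintro ⟨k, hk⟩
    have : x ∈ LinearMap.ker (N ^ (1 + k)) := by
      rw [LinearMap.mem_ker, pow_add, mul_apply, hk, map_zero]
    rw [← ker_pow_constant hker k, LinearMap.mem_ker] at this
    simpa [N, sub_eq_zero] using this
  · intro hx
    exact ⟨1, by simp [hx]⟩

theorem exists_isProj_peripheralEigenspace_tendsto_pow [FiniteDimensional ℂ V] :
    ∃ nj : ℕ → ℕ, StrictMono nj ∧ ∃ P : Module.End ℂ V, LinearMap.IsProj f.peripheralEigenspace P ∧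
      ∀ x, Tendsto (fun j => (f ^ nj j) x) atTop (𝓝 (P x)) := by
  set S := {z : ℂ | ‖z‖ = 1 ∧ f.HasEigenvalue z}
  have : Finite S := f.finite_hasEigenvalue.subset fun z hz => hz.2
  obtain ⟨nj, hmono, hnj⟩ :=
    exists_strictMono_tendsto_pow_nhds_one (fun z : S => (z : ℂ)) fun z => z.2.1
  have hfix : ∀ z : ℂ, ‖z‖ = 1 → ∀ x ∈ f.eigenspace z,
      Tendsto (fun j => (f ^ nj j) x) atTop (𝓝 x) := by
    intro z hz x hx
    obtain rfl | hx0 := eq_or_ne x 0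
    · simp
    have hv : f.HasEigenvector z x := ⟨hx, hx0⟩
    simpa [hv.pow_apply] using (hnj ⟨z, hz, hasEigenvalue_of_hasEigenvector hv⟩).smul_const x
  have hconv : ∀ x, ∃ y ∈ f.peripheralEigenspace, Tendsto (fun j => (f ^ nj j) x) atTop (𝓝 y) := by
    intro x
    refine Submodule.iSup_induction _
      (motive := fun x => ∃ y ∈ f.peripheralEigenspace, Tendsto (fun j => (f ^ nj j) x) atTop (𝓝 y))
      (f.iSup_maxGenEigenspace_eq_top ▸ Submodule.mem_top (x := x)) (fun μ x hx => ?_) ?_ ?_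
    · rcases lt_trichotomy ‖μ‖ 1 with hlt | heq | hgt
      · exact ⟨0, zero_mem _,
          (tendsto_pow_apply_of_mem_maxGenEigenspace hlt hx).comp hmono.tendsto_atTop⟩
      · rw [maxGenEigenspace_eq_eigenspace_of_norm_eq_one hf heq] at hx
        exact ⟨x, Submodule.mem_iSup_of_mem μ (Submodule.mem_iSup_of_mem heq hx), hfix μ heq x hx⟩
      · rw [maxGenEigenspace_eq_bot_of_one_lt_norm hf hgt, Submodule.mem_bot] at hx
        exact ⟨0, zero_mem _, by simp [hx]⟩
    · exact ⟨0, zero_mem _, by simp⟩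
    · rintro x y ⟨x', hx', hx⟩ ⟨y', hy', hy⟩
      exact ⟨x' + y', add_mem hx' hy', by simpa using hx.add hy⟩
  choose p hpW hp using hconv
  set P := linearMapOfTendsto p (fun j => f ^ nj j) (tendsto_pi_nhds.mpr hp)
  have hW : f.peripheralEigenspace ≤ LinearMap.eqLocus P LinearMap.id :=
    iSup₂_le fun z hz x hx => tendsto_nhds_unique (hp x) (hfix z hz x hx)
  exact ⟨nj, hmono, P, ⟨hpW, fun x hx => hW hx⟩, hp⟩

end PowerBounded

end Module.End

namespace IsCompletelyPositive

variable {A : Type*} [NormedRing A] [StarRing A] [NormedAlgebra ℂ A] {Φ Ψ : A →L[ℂ] A}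

lemma mul (hΦ : IsCompletelyPositive Φ) (hΨ : IsCompletelyPositive Ψ) :
    IsCompletelyPositive (Φ * Ψ) := fun n M hM =>
  hΦ n (M.map Ψ) (hΨ n M hM)

lemma pow (hΦ : IsCompletelyPositive Φ) (k : ℕ) : IsCompletelyPositive (Φ ^ k) := by
  induction k with
  | zero => intro n M hM; simpa using hM
  | succ k ih => rw [pow_succ]; exact ih.mul hΦ

end IsCompletelyPositive

section CStarAlgebra

variable {A : Type*} [CStarAlgebra A]

theorem isClosed_setOf_exists_eq_conjTranspose_mul_self (n : ℕ) :
    IsClosed {M : Matrix (Fin n) (Fin n) A | ∃ N, M = N.conjTranspose * N} := by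
  let := CStarAlgebra.spectralOrder A
  let := CStarAlgebra.spectralOrderedRing A
  convert (CStarAlgebra.isClosed_nonneg (A := CStarMatrix (Fin n) (Fin n) A)).preimage
    CStarMatrix.ofMatrixL.continuous using 1
  ext M
  -- Instance search misses the real functional calculus of `CStarMatrix`: its `Module ℝ`
  -- structure agrees with the one coming from `ℂ` only after unfolding.
  exact (@CStarAlgebra.nonneg_iff_eq_star_mul_self (CStarMatrix (Fin n) (Fin n) A) _ _ _ _ _ _ _ _
    IsSelfAdjoint.instNonUnitalContinuousFunctionalCalculus _ _ _ (CStarMatrix.ofMatrix M)).symm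

theorem isClosed_setOf_isCompletelyPositive :
    IsClosed {Φ : A →L[ℂ] A | IsCompletelyPositive Φ} := by
  simp only [IsCompletelyPositive, Set.ofPred_forall]
  refine isClosed_iInter fun n => isClosed_iInter fun M => isClosed_iInter fun _ => ?_
  exact (isClosed_setOf_exists_eq_conjTranspose_mul_self n).preimage
    (continuous_pi fun i => continuous_pi fun j => continuous_eval_const (M i j))

namespace IsCompletelyPositive

variable {Φ : A →L[ℂ] A}

lemma map_nonneg [PartialOrder A] [StarOrderedRing A] (hΦ : IsCompletelyPositive Φ) {a : A}
    (ha : 0 ≤ a) : 0 ≤ Φ a := by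
  obtain ⟨b, rfl⟩ := CStarAlgebra.nonneg_iff_eq_star_mul_self.mp ha
  obtain ⟨N, hN⟩ := hΦ 1 (Matrix.of fun _ _ => star b * b)
    ⟨Matrix.of fun _ _ => b, by ext; simp [Matrix.mul_apply]⟩
  have h00 := congrFun (congrFun hN 0) 0
  simp only [Matrix.map_apply, Matrix.of_apply, Matrix.mul_apply, Matrix.conjTranspose_apply,
    Finset.univ_unique, Fin.default_eq_zero, Finset.sum_singleton] at h00
  rw [h00]
  exact star_mul_self_nonneg _

lemma norm_apply_le_of_nonneg [PartialOrder A] [StarOrderedRing A] (hΦ : IsCompletelyPositive Φ)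
    (h1 : Φ 1 = 1) {a : A} (ha : 0 ≤ a) : ‖Φ a‖ ≤ ‖a‖ := by
  have hscalar : Φ (algebraMap ℝ A ‖a‖) = algebraMap ℝ A ‖a‖ := by
    rw [Algebra.algebraMap_eq_smul_one, ← Complex.coe_smul, map_smul, h1]
  rw [CStarAlgebra.norm_le_iff_le_algebraMap _ (norm_nonneg a) (hΦ.map_nonneg ha), ← hscalar,
    ← sub_nonneg, ← map_sub]
  exact hΦ.map_nonneg (sub_nonneg.mpr (IsSelfAdjoint.of_nonneg ha).le_algebraMap_norm_self)

lemma norm_apply_le (hΦ : IsCompletelyPositive Φ) (h1 : Φ 1 = 1) (a : A) :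
    ‖Φ a‖ ≤ 4 * ‖a‖ := by
  let := CStarAlgebra.spectralOrder A
  let := CStarAlgebra.spectralOrderedRing A
  obtain ⟨x, hx, hxa, ha⟩ := CStarAlgebra.exists_sum_four_nonneg a
  calc ‖Φ a‖ ≤ ∑ i : Fin 4, ‖Φ (x i)‖ := by
        rw [ha, map_sum]
        refine (norm_sum_le _ _).trans_eq (Finset.sum_congr rfl fun i _ => ?_)
        simp [norm_smul]
    _ ≤ ∑ i : Fin 4, ‖a‖ :=
        Finset.sum_le_sum fun i _ => (hΦ.norm_apply_le_of_nonneg h1 (hx i)).trans (hxa i)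
    _ = 4 * ‖a‖ := by simp

end IsCompletelyPositive

end CStarAlgebra

/-- For a unital completely positive map `Φ` on a finite-dimensional
C*-algebra there is a strictly increasing sequence `(n_j)` with `Φ^{n_j}` converging in
norm to the spectral projection `P` onto the sum of the peripheral eigenspaces; `P` is a
unital completely positive projection. -/
theorem stmt_15 {A : Type*} [NormedRing A] [StarRing A] [CStarRing A] [NormedAlgebra ℂ A]
    [StarModule ℂ A] [FiniteDimensional ℂ A]
    (Φ : A →L[ℂ] A)
    (hone : Φ 1 = 1)
    (hcp : IsCompletelyPositive Φ) :
    ∃ (nj : ℕ → ℕ) (P : A →L[ℂ] A), StrictMono nj ∧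
      Tendsto (fun j => Φ ^ (nj j)) atTop (nhds P) ∧
      P * P = P ∧ P 1 = 1 ∧ IsCompletelyPositive P ∧
      LinearMap.range (P : A →ₗ[ℂ] A) =
        ⨆ z ∈ {z : ℂ | ‖z‖ = 1}, Module.End.eigenspace (Φ : A →ₗ[ℂ] A) z := by
  let _ : CStarAlgebra A := { ‹NormedRing A›, ‹StarRing A›, ‹CStarRing A›, ‹NormedAlgebra ℂ A›,
    ‹StarModule ℂ A›, FiniteDimensional.complete ℂ A with }
  have hone_pow : ∀ n, (Φ ^ n) 1 = 1 := fun n => by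
    rw [FunLike.coe_pow_eq_iterate]
    exact Function.iterate_fixed hone n
  obtain ⟨nj, hmono, P, hP, hlim⟩ :=
    Module.End.exists_isProj_peripheralEigenspace_tendsto_pow (f := (Φ : A →ₗ[ℂ] A)) (C := 4)
      fun n x => by
        rw [← ContinuousLinearMap.toLinearMap_pow]
        exact (hcp.pow n).norm_apply_le (hone_pow n) x
  set P' := LinearMap.toContinuousLinearMap P
  have hlim' : Tendsto (fun j => Φ ^ nj j) atTop (𝓝 P') :=
    ContinuousLinearMap.tendsto_of_forall_tendsto_apply fun x => by
      have := hlim x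
      simp only [← ContinuousLinearMap.toLinearMap_pow, ContinuousLinearMap.coe_coe] at this
      exact this
  refine ⟨nj, P', hmono, hlim', ContinuousLinearMap.ext fun x => hP.map_id _ (hP.map_mem x),
    (isClosed_eq (continuous_eval_const 1) continuous_const).mem_of_tendsto hlim'
      (Eventually.of_forall fun n => hone_pow _),
    isClosed_setOf_isCompletelyPositive.mem_of_tendsto hlim'
      (Eventually.of_forall fun n => hcp.pow _), hP.range⟩
end
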